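/- Let x be a solution of the COVID-19 system with x(t) in the nonnegative orthant for all t ≥ 0. Then the total population satisfies N(t) ≤ Λ/μ + (N(0) − Λ/μ)·e^{−μt} for all t ≥ 0; in particular N(t) ≤ Λ/μ + N(0) for all t ≥ 0. -/

import Mathlib

open scoped BigOperators

/-- The vector field of the deterministic SQEAIHR COVID-19 model.
State: `x = (S, Q, E, A, I, H, R)` indexed by `Fin 7`. -/
noncomputable def covidF (Λ b q lam μ σ εA γA dA εI γI dI γH dH θ p β₁ β₂ : ℝ)
    (x : Fin 7 → ℝ) : Fin 7 → ℝ :=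
  ![Λ - (β₁ - β₂ * x 4 / (b + x 4)) * x 0 * (x 4 + θ * x 3) + lam * x 1 - (μ + q) * x 0,
    q * x 0 - (μ + lam) * x 1,
    (β₁ - β₂ * x 4 / (b + x 4)) * x 0 * (x 4 + θ * x 3) - (μ + σ) * x 2,
    (1 - p) * σ * x 2 - (μ + εA + γA + dA) * x 3,
    σ * p * x 2 - (μ + εI + γI + dI) * x 4,
    εI * x 4 + εA * x 3 - (μ + dH + γH) * x 5,
    γH * x 5 + γI * x 4 + γA * x 3 - μ * x 6]

/-- A solution of the system on `[0, ∞)`: a function differentiable (within `[0,∞)`) whose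
derivative equals the vector field at every `t ≥ 0`. -/
def IsSolution (F : (Fin 7 → ℝ) → Fin 7 → ℝ) (x : ℝ → Fin 7 → ℝ) : Prop :=
  ∀ t : ℝ, 0 ≤ t → HasDerivWithinAt x (F (x t)) (Set.Ici (0 : ℝ)) t

/-! Summing the seven equations, all transmission and transfer terms cancel and
`N' = Λ - μ N - d_A A - d_I I - d_H H ≤ Λ - μ N` on the nonnegative orthant. Comparing `N` with
the solution of the linear equation `y' = Λ - μ y` through `N 0` gives the first bound, and the
second follows since `exp (-μ t) ∈ (0, 1]`. -/

open Set Real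

theorem HasDerivWithinAt.sum_apply {ι : Type*} [Fintype ι] {x : ℝ → ι → ℝ} {x' : ι → ℝ}
    {s : Set ℝ} {t : ℝ} (h : HasDerivWithinAt x x' s t) :
    HasDerivWithinAt (fun u => ∑ i, x u i) (∑ i, x' i) s t :=
  HasDerivWithinAt.fun_sum fun i _ => hasDerivWithinAt_pi.mp h i

/-- The right-hand side solves `y' = Λ - μ y` with `y 0 = f 0`: Grönwall's inequality
with `K = -μ`. -/
theorem le_div_add_mul_exp_of_hasDerivWithinAt_le {f f' : ℝ → ℝ} {Λ μ : ℝ} (hμ : μ ≠ 0)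
    (hf : ∀ t, 0 ≤ t → HasDerivWithinAt f (f' t) (Ici 0) t)
    (bound : ∀ t, 0 ≤ t → f' t ≤ Λ - μ * f t) {t : ℝ} (ht : 0 ≤ t) :
    f t ≤ Λ / μ + (f 0 - Λ / μ) * exp (-μ * t) := by
  have hcont : ContinuousOn f (Icc 0 t) := fun s hs =>
    ((hf s hs.1).continuousWithinAt).mono Icc_subset_Ici_self
  have hgron := le_gronwallBound_of_liminf_deriv_right_le (K := -μ) (ε := Λ) hcont
    (fun s hs _ hr => ((hf s hs.1).mono (Ici_subset_Ici.mpr hs.1)).liminf_right_slope_le hr)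
    le_rfl (fun s hs => by linarith [bound s hs.1]) t ⟨ht, le_rfl⟩
  rw [gronwallBound_of_K_ne_0 (neg_ne_zero.mpr hμ), sub_zero] at hgron
  exact hgron.trans_eq (by rw [div_neg]; ring)

theorem add_sub_mul_le_add {a c e : ℝ} (ha : 0 ≤ a) (hc : 0 ≤ c) (he₀ : 0 ≤ e) (he₁ : e ≤ 1) :
    c + (a - c) * e ≤ c + a := by
  nlinarith [mul_nonneg hc he₀]

theorem sum_covidF (Λ b q lam μ σ εA γA dA εI γI dI γH dH θ p β₁ β₂ : ℝ) (y : Fin 7 → ℝ) :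
    ∑ i, covidF Λ b q lam μ σ εA γA dA εI γI dI γH dH θ p β₁ β₂ y i
      = Λ - μ * ∑ i, y i - dA * y 3 - dI * y 4 - dH * y 5 := by
  simp only [covidF, Fin.sum_univ_seven, Matrix.cons_val_zero, Matrix.cons_val_one,
    Matrix.cons_val]
  ring

theorem covid_total_population_bound_general
    (Λ b q lam μ σ εA γA dA εI γI dI γH dH θ p β₁ β₂ : ℝ)
    (hΛ : 0 < Λ) (hμ : 0 < μ) (hdA : 0 < dA) (hdI : 0 < dI) (hdH : 0 < dH)
    (x : ℝ → Fin 7 → ℝ)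
    (hx : IsSolution (covidF Λ b q lam μ σ εA γA dA εI γI dI γH dH θ p β₁ β₂) x)
    (hnonneg : ∀ t : ℝ, 0 ≤ t → ∀ i, 0 ≤ x t i) :
    ∀ t : ℝ, 0 ≤ t →
      (∑ i, x t i) ≤ Λ / μ + ((∑ i, x 0 i) - Λ / μ) * Real.exp (-μ * t) ∧
      (∑ i, x t i) ≤ Λ / μ + ∑ i, x 0 i := by
  intro t ht
  have hN'_le : ∀ s, 0 ≤ s →
      ∑ i, covidF Λ b q lam μ σ εA γA dA εI γI dI γH dH θ p β₁ β₂ (x s) i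
        ≤ Λ - μ * ∑ i, x s i := fun s hs => by
    rw [sum_covidF]
    linarith [mul_nonneg hdA.le (hnonneg s hs 3), mul_nonneg hdI.le (hnonneg s hs 4),
      mul_nonneg hdH.le (hnonneg s hs 5)]
  have hbound := le_div_add_mul_exp_of_hasDerivWithinAt_le hμ.ne'
    (fun s hs => (hx s hs).sum_apply) hN'_le ht
  refine ⟨hbound, hbound.trans (add_sub_mul_le_add ?_ (div_pos hΛ hμ).le (exp_pos _).le ?_)⟩
  · exact Finset.sum_nonneg fun i _ => hnonneg 0 le_rfl i
  · exact exp_le_one_iff.mpr (mul_nonpos_of_nonpos_of_nonneg (neg_nonpos.mpr hμ.le) ht)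

/-- the total population of a nonnegative solution satisfies
`N(t) ≤ Λ/μ + (N(0) − Λ/μ)·exp(−μt)` and hence `N(t) ≤ Λ/μ + N(0)` for all `t ≥ 0`. -/
theorem covid_total_population_bound
    (Λ b q lam μ σ εA γA dA εI γI dI γH dH θ p β₁ β₂ : ℝ)
    (hΛ : 0 < Λ) (hb : 0 < b) (hq : 0 < q) (hlam : 0 < lam) (hμ : 0 < μ)
    (hσ : 0 < σ) (hεA : 0 < εA) (hγA : 0 < γA) (hdA : 0 < dA)
    (hεI : 0 < εI) (hγI : 0 < γI) (hdI : 0 < dI) (hγH : 0 < γH) (hdH : 0 < dH)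
    (hθ : θ ∈ Set.Ioo (0 : ℝ) 1) (hp : p ∈ Set.Ioo (0 : ℝ) 1)
    (hβ₂ : 0 < β₂) (hβ : β₂ ≤ β₁)
    (x : ℝ → Fin 7 → ℝ)
    (hx : IsSolution (covidF Λ b q lam μ σ εA γA dA εI γI dI γH dH θ p β₁ β₂) x)
    (hnonneg : ∀ t : ℝ, 0 ≤ t → ∀ i, 0 ≤ x t i) :
    ∀ t : ℝ, 0 ≤ t →
      (∑ i, x t i) ≤ Λ / μ + ((∑ i, x 0 i) - Λ / μ) * Real.exp (-μ * t) ∧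
      (∑ i, x t i) ≤ Λ / μ + ∑ i, x 0 i :=
  covid_total_population_bound_general Λ b q lam μ σ εA γA dA εI γI dI γH dH θ p β₁ β₂ hΛ hμ hdA hdI
    hdH x hx hnonneg
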